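/- arXiv:1907.03166 — 2 statements merged into one kernel-verified Lean document; each statement's English description precedes it below -/
import Mathlib

section
/- Let D be a simple digraph and G = G(D) its associated bipartite graph with the canonical perfect matching M_D. Every circuit C of even length in G such that a collection of alternating edges of C forms a subset of M_D is in fact a cycle (i.e., the vertices of C are pairwise distinct). -/
/-!
Every vertex of the circuit is an endpoint of one of its matching edges. In a matching a vertex
lies on at most one edge, so two visits of the same vertex see the same matching edge. As the
graph is bipartite, the circuit traverses all its matching edges in the same direction (from one
colour class to the other), so the two matching edges even agree as ordered pairs and hence,
the edges of the circuit being distinct, sit at a single position `a`. Both visits are then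
endpoints of that edge, i.e. at positions `a` or `a + 1`, and these carry different vertices.
-/

/-- The bipartite graph `G(D)` associated to a digraph `D` on `m` vertices with
edge relation `A`: vertices `x_i = Sum.inl i` and `y_i = Sum.inr i`, edges
`{x_i, y_i}` for all `i`, and `{x_i, y_j}` whenever `z_i → z_j` in `D`. -/
def digraphBip (m : ℕ) (A : Fin m → Fin m → Prop) : SimpleGraph (Fin m ⊕ Fin m) where
  Adj u w := ∃ i j, (i = j ∨ A i j) ∧
    ((u = Sum.inl i ∧ w = Sum.inr j) ∨ (u = Sum.inr j ∧ w = Sum.inl i))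
  symm := by
    constructor
    rintro u w ⟨i, j, hij, h | h⟩
    · exact ⟨i, j, hij, Or.inr ⟨h.2, h.1⟩⟩
    · exact ⟨i, j, hij, Or.inl ⟨h.2, h.1⟩⟩
  loopless := by
    constructor
    rintro u ⟨i, j, hij, ⟨h1, h2⟩ | ⟨h1, h2⟩⟩ <;> subst h1 <;> simp at h2

/-- The canonical matching `M_D = {{x_i, y_i} : i}` of `G(D)`, as a subgraph. -/
def matchingSub (m : ℕ) (A : Fin m → Fin m → Prop) : (digraphBip m A).Subgraph where
  verts := Set.univ
  Adj u w := ∃ i, (u = Sum.inl i ∧ w = Sum.inr i) ∨ (u = Sum.inr i ∧ w = Sum.inl i)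
  adj_sub := by rintro u w ⟨i, h⟩; exact ⟨i, i, Or.inl rfl, h⟩
  edge_vert := by intro u w _; trivial
  symm := by
    constructor
    rintro u w ⟨i, h | h⟩
    exacts [⟨i, Or.inr ⟨h.2, h.1⟩⟩, ⟨i, Or.inl ⟨h.2, h.1⟩⟩]

lemma Nat.exists_mod_two_eq_and_eq_or_eq_succ_mod {t c k : ℕ} (hc : c < 2) (hk : k < 2 * t) :
    ∃ a < 2 * t, a % 2 = c ∧ (k = a ∨ k = (a + 1) % (2 * t)) := by
  by_cases hkc : k % 2 = c
  · exact ⟨k, hk, hkc, Or.inl rfl⟩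
  cases k with
  | zero =>
    refine ⟨2 * t - 1, by omega, by omega, Or.inr ?_⟩
    rw [Nat.sub_add_cancel (by omega), Nat.mod_self]
  | succ k => exact ⟨k, by omega, by omega, Or.inr (Nat.mod_eq_of_lt hk).symm⟩

lemma Function.apply_succ_mod_of_apply_eq {α : Type*} {w : ℕ → α} {n a : ℕ}
    (hclosed : w n = w 0) (ha : a < n) : w ((a + 1) % n) = w (a + 1) := by
  rcases (show a + 1 ≤ n from ha).lt_or_eq with h | h
  · rw [Nat.mod_eq_of_lt h]
  · rw [h, Nat.mod_self, hclosed]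

namespace SimpleGraph

variable {V : Type*} {G : SimpleGraph V}

namespace Coloring

lemma apply_eq_xor_mod_two (col : G.Coloring Bool) {w : ℕ → V} {n : ℕ}
    (hadj : ∀ k < n, G.Adj (w k) (w (k + 1))) :
    ∀ k ≤ n, col (w k) = xor (col (w 0)) (decide (k % 2 = 1)) := by
  intro k hk
  induction k with
  | zero => simp
  | succ k ih =>
    have hflip : col (w (k + 1)) = !col (w k) := Bool.eq_not.mpr (col.valid (hadj k hk).symm)
    have hparity : decide ((k + 1) % 2 = 1) = !decide (k % 2 = 1) := by
      rcases Nat.mod_two_eq_zero_or_one k with h | h <;> simp [h, Nat.succ_mod_two_eq_one_iff]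
    rw [hflip, ih (by omega), hparity, Bool.xor_not]

lemma eq_of_sym2_eq_of_apply_eq (col : G.Coloring Bool) {u v u' v' : V} (huv : G.Adj u v)
    (h : s(u, v) = s(u', v')) (hcol : col u = col u') : (u, v) = (u', v') := by
  rcases Sym2.eq_iff.mp h with ⟨rfl, rfl⟩ | ⟨rfl, rfl⟩
  · rfl
  · exact absurd hcol (col.valid huv)

end Coloring

namespace Subgraph.IsMatching

variable {M : G.Subgraph}

lemma eq_of_mem_edgeSet_of_mem (hM : M.IsMatching) {e f : Sym2 V} {v : V}
    (he : e ∈ M.edgeSet) (hf : f ∈ M.edgeSet) (hve : v ∈ e) (hvf : v ∈ f) : e = f := by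
  obtain ⟨x, rfl⟩ := Sym2.mem_iff_exists.mp hve
  obtain ⟨y, rfl⟩ := Sym2.mem_iff_exists.mp hvf
  rw [hM.eq_of_adj_left (M.mem_edgeSet.mp he) (M.mem_edgeSet.mp hf)]

theorem injOn_of_alternating_closed_walk (hM : M.IsMatching) (col : G.Coloring Bool)
    {t c : ℕ} {w : ℕ → V} (hclosed : w (2 * t) = w 0)
    (hadj : ∀ k < 2 * t, G.Adj (w k) (w (k + 1)))
    (hsteps : Set.InjOn (fun k ↦ (w k, w (k + 1))) (Set.Iio (2 * t)))
    (hc2 : c < 2) (hc : ∀ k < 2 * t, k % 2 = c → M.Adj (w k) (w (k + 1))) :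
    Set.InjOn w (Set.Iio (2 * t)) := by
  have mem_edge : ∀ k a, a < 2 * t → (k = a ∨ k = (a + 1) % (2 * t)) →
      w k ∈ s(w a, w (a + 1)) := by
    rintro k a ha (rfl | rfl)
    · exact Sym2.mem_mk_left _ _
    · rw [Function.apply_succ_mod_of_apply_eq hclosed ha]
      exact Sym2.mem_mk_right _ _
  intro k₁ hk₁ k₂ hk₂ hw
  obtain ⟨a, ha, hac, h₁⟩ := Nat.exists_mod_two_eq_and_eq_or_eq_succ_mod hc2 hk₁
  obtain ⟨b, hb, hbc, h₂⟩ := Nat.exists_mod_two_eq_and_eq_or_eq_succ_mod hc2 hk₂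
  have hedge : s(w a, w (a + 1)) = s(w b, w (b + 1)) :=
    hM.eq_of_mem_edgeSet_of_mem (hc a ha hac) (hc b hb hbc)
      (mem_edge k₁ a ha h₁) (hw ▸ mem_edge k₂ b hb h₂)
  have hcol : col (w a) = col (w b) := by
    rw [col.apply_eq_xor_mod_two hadj a ha.le, col.apply_eq_xor_mod_two hadj b hb.le, hac, hbc]
  have hab : a = b := hsteps ha hb (col.eq_of_sym2_eq_of_apply_eq (hadj a ha) hedge hcol)
  subst hab
  have hloop : w a ≠ w ((a + 1) % (2 * t)) := by
    rw [Function.apply_succ_mod_of_apply_eq hclosed ha]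
    exact (hadj a ha).ne
  rcases h₁ with rfl | rfl <;> rcases h₂ with rfl | rfl
  · rfl
  · exact absurd hw hloop
  · exact absurd hw.symm hloop
  · rfl

end Subgraph.IsMatching

end SimpleGraph

def digraphBipColoring (m : ℕ) (A : Fin m → Fin m → Prop) : (digraphBip m A).Coloring Bool :=
  SimpleGraph.Coloring.mk Sum.isLeft <| by
    rintro u v ⟨i, j, -, ⟨rfl, rfl⟩ | ⟨rfl, rfl⟩⟩ <;> simp

lemma matchingSub_isMatching (m : ℕ) (A : Fin m → Fin m → Prop) :
    (matchingSub m A).IsMatching := by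
  rintro (i | i) -
  · refine ⟨Sum.inr i, ⟨i, Or.inl ⟨rfl, rfl⟩⟩, ?_⟩
    rintro u ⟨j, ⟨hij, rfl⟩ | ⟨hij, -⟩⟩ <;> cases hij
    rfl
  · refine ⟨Sum.inl i, ⟨i, Or.inr ⟨rfl, rfl⟩⟩, ?_⟩
    rintro u ⟨j, ⟨hij, -⟩ | ⟨hij, rfl⟩⟩ <;> cases hij
    rfl

theorem stmt10_general (m t : ℕ) (A : Fin m → Fin m → Prop)
    (w : ℕ → Fin m ⊕ Fin m) (hclosed : w (2 * t) = w 0)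
    (hadj : ∀ k < 2 * t, (digraphBip m A).Adj (w k) (w (k + 1)))
    (hedges : ∀ k₁ < 2 * t, ∀ k₂ < 2 * t,
      Sym2.mk (w k₁, w (k₁ + 1)) = Sym2.mk (w k₂, w (k₂ + 1)) → k₁ = k₂)
    (halt : (∀ k < 2 * t, k % 2 = 0 → (matchingSub m A).Adj (w k) (w (k + 1))) ∨
            (∀ k < 2 * t, k % 2 = 1 → (matchingSub m A).Adj (w k) (w (k + 1)))) :
    ∀ k₁ < 2 * t, ∀ k₂ < 2 * t, w k₁ = w k₂ → k₁ = k₂ := by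
  have hM := matchingSub_isMatching m A
  have col := digraphBipColoring m A
  -- `Sym2.mk` is curried, so `hedges` compares the ordered pairs `(w k, w (k + 1))`.
  have hsteps : Set.InjOn (fun k ↦ (w k, w (k + 1))) (Set.Iio (2 * t)) :=
    fun k₁ hk₁ k₂ hk₂ h ↦ hedges k₁ hk₁ k₂ hk₂ (congrArg Sym2.mk h)
  intro k₁ hk₁ k₂ hk₂
  rcases halt with hc | hc
  · exact hM.injOn_of_alternating_closed_walk col hclosed hadj hsteps two_pos hc hk₁ hk₂
  · exact hM.injOn_of_alternating_closed_walk col hclosed hadj hsteps one_lt_two hc hk₁ hk₂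

/-- Every circuit of even length `2t` in `G(D)` (a closed walk with
pairwise distinct edges) such that a collection of alternating edges (either all the
even-position edges or all the odd-position edges) lies in the matching `M_D`
is in fact a cycle: its vertices are pairwise distinct. -/
theorem stmt10 (m t : ℕ) (ht : 1 ≤ t) (A : Fin m → Fin m → Prop) (hA : ∀ i, ¬ A i i)
    (w : ℕ → Fin m ⊕ Fin m) (hclosed : w (2 * t) = w 0)
    (hadj : ∀ k < 2 * t, (digraphBip m A).Adj (w k) (w (k + 1)))
    (hedges : ∀ k₁ < 2 * t, ∀ k₂ < 2 * t,
      Sym2.mk (w k₁, w (k₁ + 1)) = Sym2.mk (w k₂, w (k₂ + 1)) → k₁ = k₂)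
    (halt : (∀ k < 2 * t, k % 2 = 0 → (matchingSub m A).Adj (w k) (w (k + 1))) ∨
            (∀ k < 2 * t, k % 2 = 1 → (matchingSub m A).Adj (w k) (w (k + 1)))) :
    ∀ k₁ < 2 * t, ∀ k₂ < 2 * t, w k₁ = w k₂ → k₁ = k₂ :=
  stmt10_general m t A w hclosed hadj hedges halt
end

section
/- Let M be a t×t matrix with entries in {0} ∪ {±T_1, ..., ±T_r} (where T_1,...,T_r are distinct indeterminates) such that det(M) is a binomial whose two monomials are squarefree and relatively prime. If every column of M has at most two nonzero entries, then every column of M has exactly two nonzero entries, every row of M has exactly two nonzero entries, and all 2t nonzero entries of M involve pairwise distinct variables. -/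
/-!
Every entry of `M` is homogeneous of degree one, so `det M` is homogeneous of degree `t` and the
two squarefree, coprime monomials involve `2t` distinct variables. Each of them occurs in some
entry: otherwise setting it to zero fixes `M`, hence `det M`, yet kills one of the monomials.
The columns hold at most `2t` nonzero entries and each carries a single variable, so there are
exactly `2t` of them, two per column, carrying pairwise distinct variables. A row whose only
nonzero entry is `±X l` would make `det M` vanish after setting `X l` to zero, impossible since
`X l` is missing from one of the monomials; so every row has at least, hence exactly, two.
-/

open MvPolynomial Finset

namespace MvPolynomial

section KillVar

variable {σ R : Type*} [CommSemiring R] [DecidableEq σ]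

noncomputable def killVar (v : σ) : MvPolynomial σ R →ₐ[R] MvPolynomial σ R :=
  aeval (Function.update X v 0)

theorem killVar_X (v w : σ) : killVar v (X w : MvPolynomial σ R) = if w = v then 0 else X w := by
  simp [killVar, Function.update_apply]

theorem killVar_monomial (v : σ) (u : σ →₀ ℕ) (a : R) :
    killVar v (monomial u a) = if u v = 0 then monomial u a else 0 := by
  rw [killVar, aeval_monomial, monomial_eq, Finsupp.prod, Finsupp.prod]
  split_ifs with hu
  · congr 1
    refine Finset.prod_congr rfl fun w hw => ?_
    rw [Function.update_of_ne (by rintro rfl; exact Finsupp.mem_support_iff.mp hw hu)]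
  · rw [Finset.prod_eq_zero (Finsupp.mem_support_iff.mpr hu) (by simp [zero_pow hu]), mul_zero]

theorem coeff_killVar (v : σ) (p : MvPolynomial σ R) (d : σ →₀ ℕ) :
    coeff d (killVar v p) = if d v = 0 then coeff d p else 0 := by
  induction p using MvPolynomial.induction_on' with
  | monomial u a =>
    rw [killVar_monomial, coeff_monomial]
    split_ifs with h₁ h₂ h₃ <;> simp_all [coeff_monomial]
    rintro rfl
    exact absurd h₁ h₂
  | add p q hp hq => rw [map_add, coeff_add, hp, hq, coeff_add]; split_ifs <;> simp

theorem killVar_ne_zero_of_coeff_ne_zero {v : σ} {p : MvPolynomial σ R} {d : σ →₀ ℕ}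
    (hd : coeff d p ≠ 0) (hv : d v = 0) : killVar v p ≠ 0 := fun h =>
  hd (by simpa [h, hv] using (coeff_killVar v p d).symm)

theorem killVar_ne_self_of_coeff_ne_zero {v : σ} {p : MvPolynomial σ R} {d : σ →₀ ℕ}
    (hd : coeff d p ≠ 0) (hv : d v ≠ 0) : killVar v p ≠ p := fun h =>
  hd (by simpa [h, hv] using coeff_killVar v p d)

end KillVar

section IsSignedVar

variable {σ R : Type*} [CommRing R]

def IsSignedVar (l : σ) (p : MvPolynomial σ R) : Prop := p = X l ∨ p = -X l

namespace IsSignedVar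

variable {l : σ} {p : MvPolynomial σ R}

theorem vars_eq [Nontrivial R] (h : IsSignedVar l p) : p.vars = {l} := by
  rcases h with rfl | rfl <;> simp [vars_neg, vars_X]

theorem ne_zero [Nontrivial R] (h : IsSignedVar l p) : p ≠ 0 := by
  rcases h with rfl | rfl <;> simp [X_ne_zero]

theorem unique [Nontrivial R] {l' : σ} (h : IsSignedVar l p) (h' : IsSignedVar l' p) : l = l' :=
  Finset.singleton_injective (h.vars_eq.symm.trans h'.vars_eq)

theorem isHomogeneous (h : IsSignedVar l p) : p.IsHomogeneous 1 := by
  rcases h with rfl | rfl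
  · exact isHomogeneous_X R l
  · exact (homogeneousSubmodule σ R 1).neg_mem (isHomogeneous_X R l)

variable [DecidableEq σ]

theorem killVar_self (h : IsSignedVar l p) : killVar l p = 0 := by
  rcases h with rfl | rfl <;> simp [killVar_X]

theorem killVar_of_ne {v : σ} (h : IsSignedVar l p) (hl : l ≠ v) : killVar v p = p := by
  rcases h with rfl | rfl <;> simp [killVar_X, hl]

end IsSignedVar

end IsSignedVar

end MvPolynomial

theorem Finsupp.degree_eq_card_support {σ : Type*} {d : σ →₀ ℕ} (hd : ∀ v, d v ≤ 1) :
    d.degree = #d.support := by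
  rw [Finsupp.degree_apply, card_eq_sum_ones]
  exact Finset.sum_congr rfl fun v hv =>
    le_antisymm (hd v) (Nat.one_le_iff_ne_zero.mpr (Finsupp.mem_support_iff.mp hv))

theorem Finset.eq_of_rel_of_card_le {α β : Type*} {r : α → β → Prop} {s : Finset α}
    {t : Finset β} (hfun : ∀ a b b', r a b → r a b' → b = b')
    (hcover : ∀ b ∈ t, ∃ a ∈ s, r a b)
    (hcard : #s ≤ #t) {a a' : α} (ha : a ∈ s) (ha' : a' ∈ s) {b : β} (hb : r a b)
    (hb' : r a' b) : a = a' := by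
  choose g hgs hgr using hcover
  have hsurj := surj_on_of_inj_on_of_card_le g hgs
    (fun c c' hc hc' h => hfun _ _ _ (hgr c hc) (h ▸ hgr c' hc')) hcard
  obtain ⟨c, hc, rfl⟩ := hsurj a ha
  obtain ⟨c', hc', rfl⟩ := hsurj a' ha'
  obtain rfl := hfun _ _ _ (hgr c hc) hb
  obtain rfl := hfun _ _ _ (hgr c' hc') hb'
  rfl

section SumEq

variable {ι M : Type*} [AddCommMonoid M] [PartialOrder M] [IsOrderedCancelAddMonoid M]
  {s : Finset ι} {f : ι → M} {c : M}

theorem Finset.eq_of_forall_le_of_card_nsmul_le_sum (h : ∀ i ∈ s, f i ≤ c)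
    (hsum : #s • c ≤ ∑ i ∈ s, f i) : ∀ i ∈ s, f i = c :=
  (sum_eq_sum_iff_of_le h).mp (le_antisymm (sum_le_sum h) (by rwa [sum_const]))

theorem Finset.eq_of_forall_ge_of_sum_le_card_nsmul (h : ∀ i ∈ s, c ≤ f i)
    (hsum : ∑ i ∈ s, f i ≤ #s • c) : ∀ i ∈ s, f i = c := fun i hi =>
  ((sum_eq_sum_iff_of_le h).mp (le_antisymm (sum_le_sum h) (by rwa [sum_const])) i hi).symm

end SumEq

namespace Matrix

def HasSignedVarEntries {n σ R : Type*} [CommRing R] (M : Matrix n n (MvPolynomial σ R)) :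
    Prop :=
  ∀ i j, M i j = 0 ∨ ∃ l, IsSignedVar l (M i j)

theorem card_ne_zero_eq_sum_col {m n α : Type*} [Fintype m] [Fintype n] [Zero α]
    [DecidableEq α] (M : Matrix m n α) :
    #{p : m × n | M p.1 p.2 ≠ 0} = ∑ j, #{i | M i j ≠ 0} := by
  simp only [card_filter, Fintype.sum_prod_type_right]

theorem card_ne_zero_eq_sum_row {m n α : Type*} [Fintype m] [Fintype n] [Zero α]
    [DecidableEq α] (M : Matrix m n α) :
    #{p : m × n | M p.1 p.2 ≠ 0} = ∑ i, #{j | M i j ≠ 0} := by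
  simp only [card_filter, Fintype.sum_prod_type]

section SignedVarCount

variable {n σ R : Type*} [Fintype n] [CommRing R] [Nontrivial R] [DecidableEq σ] [DecidableEq R]
  {M : Matrix n n (MvPolynomial σ R)} (S : Finset σ)

theorem card_le_card_ne_zero_of_forall_isSignedVar
    (hS : ∀ v ∈ S, ∃ i j, IsSignedVar v (M i j)) : #S ≤ #{p : n × n | M p.1 p.2 ≠ 0} :=
  card_le_card_of_forall_subsingleton (fun v p => IsSignedVar v (M p.1 p.2))
    (fun v hv => let ⟨i, j, h⟩ := hS v hv; ⟨(i, j), by simpa using h.ne_zero, h⟩)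
    fun _ _ _ hl _ hl' => hl.2.unique hl'.2

theorem eq_of_isSignedVar_of_card_ne_zero_le (hS : ∀ v ∈ S, ∃ i j, IsSignedVar v (M i j))
    (hcard : #{p : n × n | M p.1 p.2 ≠ 0} ≤ #S)
    {i j i' j' : n} {l : σ} (h : IsSignedVar l (M i j)) (h' : IsSignedVar l (M i' j')) :
    (i, j) = (i', j') :=
  eq_of_rel_of_card_le (r := fun (p : n × n) (v : σ) => IsSignedVar v (M p.1 p.2))
    (fun _ _ _ h h' => h.unique h')
    (fun v hv => let ⟨i, j, h⟩ := hS v hv; ⟨(i, j), by simpa using h.ne_zero, h⟩) hcard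
    (by simpa using h.ne_zero) (by simpa using h'.ne_zero) h h'

end SignedVarCount

variable {n σ R : Type*} [Fintype n] [DecidableEq n] [CommRing R]
  {M : Matrix n n (MvPolynomial σ R)}

theorem isHomogeneous_det (h : ∀ i j, (M i j).IsHomogeneous 1) :
    M.det.IsHomogeneous (Fintype.card n) := by
  rw [det_apply]
  refine IsHomogeneous.sum _ _ _ fun τ _ => ?_
  have := IsHomogeneous.prod univ (fun i => M (τ i) i) (fun _ => 1) fun i _ => h _ _
  rw [sum_const, smul_eq_mul, mul_one, card_univ] at this
  rw [Units.smul_def]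
  exact (homogeneousSubmodule σ R _).toAddSubgroup.zsmul_mem this _

theorem killVar_det_eq_self [DecidableEq σ] {v : σ} (h : ∀ i j, killVar v (M i j) = M i j) :
    killVar v M.det = M.det := by
  rw [AlgHom.map_det]
  exact congrArg det (ext h)

theorem killVar_det_eq_zero [DecidableEq σ] {v : σ} (i : n) (h : ∀ j, killVar v (M i j) = 0) :
    killVar v M.det = 0 := by
  rw [AlgHom.map_det]
  exact det_eq_zero_of_row_eq_zero i h

theorem card_support_eq_of_coeff_det_ne_zero (hM : M.HasSignedVarEntries) {d : σ →₀ ℕ}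
    (hd : coeff d M.det ≠ 0) (hsf : ∀ v, d v ≤ 1) : #d.support = Fintype.card n := by
  have hhom : M.det.IsHomogeneous (Fintype.card n) := isHomogeneous_det fun i j => by
    rcases hM i j with h | ⟨l, hl⟩
    · simpa [h] using isHomogeneous_zero σ R 1
    · exact hl.isHomogeneous
  rw [← Finsupp.degree_eq_card_support hsf, Finsupp.degree_eq_weight_one]
  exact hhom hd

theorem exists_isSignedVar_of_mem_support [DecidableEq σ] (hM : M.HasSignedVarEntries)
    {d : σ →₀ ℕ} (hd : coeff d M.det ≠ 0) {v : σ} (hv : v ∈ d.support) :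
    ∃ i j, IsSignedVar v (M i j) := by
  by_contra! hnot
  refine killVar_ne_self_of_coeff_ne_zero hd (Finsupp.mem_support_iff.mp hv)
    (killVar_det_eq_self fun i j => ?_)
  rcases hM i j with h | ⟨l, hl⟩
  · simp [h]
  · exact hl.killVar_of_ne (by rintro rfl; exact hnot i j hl)

theorem two_le_card_row [DecidableEq σ] [DecidableEq R] (hM : M.HasSignedVarEntries)
    (hdet : M.det ≠ 0) (hkill : ∀ v, killVar v M.det ≠ 0) (i : n) :
    2 ≤ #{j | M i j ≠ 0} := by
  by_contra! hlt
  have hsub : ∀ j j', M i j ≠ 0 → M i j' ≠ 0 → j = j' := fun j j' hj hj' =>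
    card_le_one.mp (Nat.le_of_lt_succ hlt) j (by simpa using hj) j' (by simpa using hj')
  by_cases hzero : ∀ j, M i j = 0
  · exact hdet (det_eq_zero_of_row_eq_zero i hzero)
  push Not at hzero
  obtain ⟨j₀, hj₀⟩ := hzero
  obtain ⟨l, hl⟩ := (hM i j₀).resolve_left hj₀
  refine hkill l (killVar_det_eq_zero i fun j => ?_)
  by_cases hj : M i j = 0
  · simp [hj]
  · rw [hsub j j₀ hj hj₀]
    exact hl.killVar_self

end Matrix

/-- Let `M` be a t×t matrix whose entries are `0` or `±T_l` for
distinct indeterminates `T_1, ..., T_r`, such that `det M` is a binomial whose two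
monomials are squarefree and relatively prime, and every column of `M` has at most
two nonzero entries. Then every column has exactly two nonzero entries, every row
has exactly two nonzero entries, and the `2t` nonzero entries involve pairwise
distinct variables. -/
theorem stmt12 {t r : ℕ} (M : Matrix (Fin t) (Fin t) (MvPolynomial (Fin r) ℚ))
    (hent : ∀ i j, M i j = 0 ∨ ∃ l, M i j = X l ∨ M i j = -X l)
    (hdet : ∃ (d₁ d₂ : Fin r →₀ ℕ) (c₁ c₂ : ℚ), c₁ ≠ 0 ∧ c₂ ≠ 0 ∧ d₁ ≠ d₂ ∧
      (∀ v, d₁ v ≤ 1) ∧ (∀ v, d₂ v ≤ 1) ∧ (∀ v, d₁ v = 0 ∨ d₂ v = 0) ∧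
      M.det = monomial d₁ c₁ + monomial d₂ c₂)
    (hcol : ∀ j, Nat.card {i : Fin t // M i j ≠ 0} ≤ 2) :
    (∀ j, Nat.card {i : Fin t // M i j ≠ 0} = 2) ∧
    (∀ i, Nat.card {j : Fin t // M i j ≠ 0} = 2) ∧
    (∀ (i₁ j₁ i₂ j₂ : Fin t) (l : Fin r), (i₁, j₁) ≠ (i₂, j₂) →
      (M i₁ j₁ = X l ∨ M i₁ j₁ = -X l) → ¬(M i₂ j₂ = X l ∨ M i₂ j₂ = -X l)) := by
  obtain ⟨d₁, d₂, c₁, c₂, hc₁, hc₂, hne, hsf₁, hsf₂, hcop, hdet⟩ := hdet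
  simp only [Nat.card_eq_fintype_card, Fintype.card_subtype] at hcol ⊢
  have hd₁ : coeff d₁ M.det ≠ 0 := by simpa [hdet, coeff_monomial, hne.symm] using hc₁
  have hd₂ : coeff d₂ M.det ≠ 0 := by simpa [hdet, coeff_monomial, hne] using hc₂
  set S := d₁.support ∪ d₂.support
  have hS : #S = 2 * t := by
    have hdisj : Disjoint d₁.support d₂.support := disjoint_left.mpr fun v h₁ h₂ =>
      (hcop v).elim (Finsupp.mem_support_iff.mp h₁) (Finsupp.mem_support_iff.mp h₂)
    rw [card_union_of_disjoint hdisj, Matrix.card_support_eq_of_coeff_det_ne_zero hent hd₁ hsf₁,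
      Matrix.card_support_eq_of_coeff_det_ne_zero hent hd₂ hsf₂, Fintype.card_fin, two_mul]
  have hcover : ∀ v ∈ S, ∃ i j, IsSignedVar v (M i j) := fun v hv => (mem_union.mp hv).elim
    (Matrix.exists_isSignedVar_of_mem_support hent hd₁)
    (Matrix.exists_isSignedVar_of_mem_support hent hd₂)
  have hSP := Matrix.card_le_card_ne_zero_of_forall_isSignedVar S hcover
  have hPS : #{p : Fin t × Fin t | M p.1 p.2 ≠ 0} ≤ #S := by
    rw [hS, Matrix.card_ne_zero_eq_sum_col, mul_comm]
    simpa using sum_le_card_nsmul univ _ 2 fun j _ => hcol j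
  refine ⟨fun j => ?_, fun i => ?_, fun i₁ j₁ i₂ j₂ l hij h₁ h₂ => ?_⟩
  · refine eq_of_forall_le_of_card_nsmul_le_sum (fun j _ => hcol j) ?_ j (mem_univ j)
    simpa [← Matrix.card_ne_zero_eq_sum_col, hS, mul_comm] using hSP
  · have hkill : ∀ v, killVar v M.det ≠ 0 := fun v => (hcop v).elim
      (killVar_ne_zero_of_coeff_ne_zero hd₁) (killVar_ne_zero_of_coeff_ne_zero hd₂)
    have hrow := Matrix.two_le_card_row hent (fun h => hd₁ (by rw [h, coeff_zero])) hkill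
    refine eq_of_forall_ge_of_sum_le_card_nsmul (fun i _ => hrow i) ?_ i (mem_univ i)
    simpa [← Matrix.card_ne_zero_eq_sum_row, hS, mul_comm] using hPS
  · exact hij (Matrix.eq_of_isSignedVar_of_card_ne_zero_le S hcover hPS h₁ h₂)
end
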